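/- Assume char k ≠ 2. Let σ, τ ∈ Gal(K/k) with σ ≠ τ, and V := K_σ ⊕ K_τ. Then Aut(V) is isomorphic as a group to (K^× × K^×)/N, where N is the subgroup {(a σ(b), a τ(b)) : a, b ∈ K^×} of K^× × K^×. -/

import Mathlib

open TensorProduct

noncomputable section

variable (k K : Type*) [Field k] [Field K] [Algebra k K]

/-- The two-sided vector space `K_σ`: the underlying set is `K`, and the `K ⊗[k] K`-module
structure is given by `(a ⊗ b) • x = a * x * σ b`. -/
def Kst (σ : K ≃ₐ[k] K) : Type _ := K

instance (σ : K ≃ₐ[k] K) : AddCommGroup (Kst k K σ) := inferInstanceAs (AddCommGroup K)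

instance (σ : K ≃ₐ[k] K) : One (Kst k K σ) := inferInstanceAs (One K)

instance (σ : K ≃ₐ[k] K) : Module (K ⊗[k] K) (Kst k K σ) :=
  Module.compHom K (Algebra.TensorProduct.productMap (AlgHom.id k K) σ.toAlgHom).toRingHom

/-- The subgroup of "inner" automorphisms of a two-sided vector space `V`, i.e. those of the
form `v ↦ a • v • b` for nonzero `a, b ∈ K`. -/
def innerAut (V : Type*) [AddCommGroup V] [Module (K ⊗[k] K) V] :
    Subgroup (V ≃ₗ[K ⊗[k] K] V) where
  carrier := {f | ∃ a b : Kˣ, ∀ v : V, f v = (((a : K) ⊗ₜ[k] (b : K)) : K ⊗[k] K) • v}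
  one_mem' := ⟨1, 1, fun v => by
    show v = _
    rw [Units.val_one, ← Algebra.TensorProduct.one_def, one_smul]⟩
  mul_mem' := by
    rintro f g ⟨a, b, hf⟩ ⟨c, d, hg⟩
    refine ⟨c * a, d * b, fun v => ?_⟩
    show f (g v) = _
    rw [hg, map_smul, hf, smul_smul, Algebra.TensorProduct.tmul_mul_tmul,
      Units.val_mul, Units.val_mul]
  inv_mem' := by
    rintro f ⟨a, b, hf⟩
    refine ⟨a⁻¹, b⁻¹, fun v => ?_⟩
    apply f.injective
    show f (f.symm v) = _
    rw [f.apply_symm_apply, hf, smul_smul, Algebra.TensorProduct.tmul_mul_tmul]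
    rw [Units.val_inv_eq_inv_val, Units.val_inv_eq_inv_val, mul_inv_cancel₀ a.ne_zero,
      mul_inv_cancel₀ b.ne_zero, ← Algebra.TensorProduct.one_def, one_smul]

instance (V : Type*) [AddCommGroup V] [Module (K ⊗[k] K) V] : (innerAut k K V).Normal := by
  constructor
  rintro f ⟨a, b, hf⟩ g
  refine ⟨a, b, fun v => ?_⟩
  show g (f (g.symm v)) = _
  rw [hf, map_smul, g.apply_symm_apply]

/-- The subgroup `N = {(a σ(b), a τ(b)) : a, b ∈ Kˣ}` of `Kˣ × Kˣ`. -/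
def NN (σ τ : K ≃ₐ[k] K) : Subgroup (Kˣ × Kˣ) where
  carrier := {p | ∃ a b : Kˣ, ((p.1 : K) = (a : K) * σ (b : K)) ∧ ((p.2 : K) = (a : K) * τ (b : K))}
  one_mem' := ⟨1, 1, by simp⟩
  mul_mem' := by
    rintro p q ⟨a, b, h1, h2⟩ ⟨c, d, h3, h4⟩
    refine ⟨a * c, b * d, ?_, ?_⟩
    · rw [Prod.fst_mul, Units.val_mul, h1, h3, Units.val_mul, Units.val_mul, map_mul]; ring
    · rw [Prod.snd_mul, Units.val_mul, h2, h4, Units.val_mul, Units.val_mul, map_mul]; ring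
  inv_mem' := by
    rintro p ⟨a, b, h1, h2⟩
    refine ⟨a⁻¹, b⁻¹, ?_, ?_⟩
    · rw [Prod.fst_inv, Units.val_inv_eq_inv_val, h1, Units.val_inv_eq_inv_val,
        Units.val_inv_eq_inv_val, map_inv₀, mul_inv]
    · rw [Prod.snd_inv, Units.val_inv_eq_inv_val, h2, Units.val_inv_eq_inv_val,
        Units.val_inv_eq_inv_val, map_inv₀, mul_inv]

instance (σ τ : K ≃ₐ[k] K) : (NN k K σ τ).Normal := Subgroup.normal_of_comm _

/-!
A `K ⊗[k] K`-linear map out of `K_σ` is determined by the image of `1`, since `K_σ` is generated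
by `1` as a left `K`-module. For `σ ≠ τ` every such map `K_σ → K_τ` vanishes: `1 ⊗ b` acts on the
image of `1` both as `σ b` and as `τ b`. Hence `End (K_σ ⊕ K_τ) ≅ K × K`, acting by left
multiplication on each summand, and `Aut (K_σ ⊕ K_τ) ≅ Kˣ × Kˣ`. Since `a ⊗ b` acts on `K_σ` as
left multiplication by `a σ(b)`, the inner automorphisms correspond to `N` under this isomorphism.
-/

variable {k K}

namespace Kst

def of (σ : K ≃ₐ[k] K) : K ≃ Kst k K σ := Equiv.refl K

variable {σ τ : K ≃ₐ[k] K}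

@[simp] lemma of_one : of σ 1 = 1 := rfl

@[simp] lemma of_zero : of σ 0 = 0 := rfl

lemma tmul_smul_of (a b x : K) : (a ⊗ₜ[k] b : K ⊗[k] K) • of σ x = of σ (a * σ b * x) := rfl

@[simp] lemma tmul_one_smul_one (c : K) :
    (c ⊗ₜ[k] (1 : K) : K ⊗[k] K) • (1 : Kst k K σ) = of σ c := by
  rw [← of_one, tmul_smul_of, map_one, mul_one, mul_one]

lemma tmul_smul_eq (a b : K) (v : Kst k K σ) :
    (a ⊗ₜ[k] b : K ⊗[k] K) • v = ((a * σ b) ⊗ₜ[k] (1 : K) : K ⊗[k] K) • v := by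
  obtain ⟨x, rfl⟩ := (of σ).surjective v
  simp only [tmul_smul_of, map_one, mul_one]

lemma linearMap_apply_of {M : Type*} [AddCommGroup M] [Module (K ⊗[k] K) M]
    (f : Kst k K σ →ₗ[K ⊗[k] K] M) (x : K) : f (of σ x) = (x ⊗ₜ[k] (1 : K) : K ⊗[k] K) • f 1 := by
  rw [← map_smul, tmul_one_smul_one]

lemma linearMap_ext {M : Type*} [AddCommGroup M] [Module (K ⊗[k] K) M]
    {f g : Kst k K σ →ₗ[K ⊗[k] K] M} (h : f 1 = g 1) : f = g := by
  ext v
  obtain ⟨x, rfl⟩ := (of σ).surjective v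
  rw [linearMap_apply_of, linearMap_apply_of, h]

lemma linearMap_eq_zero_of_ne (hστ : σ ≠ τ) (f : Kst k K σ →ₗ[K ⊗[k] K] Kst k K τ) : f = 0 := by
  obtain ⟨b, hb⟩ : ∃ b, σ b ≠ τ b := not_forall.mp fun h => hστ (AlgEquiv.ext h)
  refine linearMap_ext ?_
  obtain ⟨y, hy⟩ := (of τ).surjective (f 1)
  have hb_act : of τ (σ b * y) = of τ (τ b * y) := by
    calc of τ (σ b * y) = f (of σ (σ b)) := by
          rw [linearMap_apply_of, ← hy, tmul_smul_of, map_one, mul_one]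
      _ = f ((1 ⊗ₜ[k] b : K ⊗[k] K) • 1) := by rw [← of_one, tmul_smul_of, one_mul, mul_one]
      _ = of τ (τ b * y) := by rw [map_smul, ← hy, tmul_smul_of, one_mul]
  have hy0 : y = 0 := by
    by_contra hy0
    exact hb (mul_right_cancel₀ hy0 ((of τ).injective hb_act))
  rw [← hy, hy0, of_zero, LinearMap.zero_apply]

end Kst

section diagonal

variable (k K) (M N : Type*) [AddCommGroup M] [Module (K ⊗[k] K) M] [AddCommGroup N]
  [Module (K ⊗[k] K) N]

def diagEnd : K × K →+* Module.End (K ⊗[k] K) (M × N) :=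
  (LinearMap.prodMapRingHom (K ⊗[k] K) M N).comp
    (RingHom.prodMap
      ((Module.toModuleEnd (K ⊗[k] K) M).comp
        (Algebra.TensorProduct.includeLeft : K →ₐ[k] K ⊗[k] K).toRingHom)
      ((Module.toModuleEnd (K ⊗[k] K) N).comp
        (Algebra.TensorProduct.includeLeft : K →ₐ[k] K ⊗[k] K).toRingHom))

variable {k K M N}

lemma diagEnd_apply (p : K × K) (v : M × N) :
    diagEnd k K M N p v =
      ((p.1 ⊗ₜ[k] (1 : K) : K ⊗[k] K) • v.1, (p.2 ⊗ₜ[k] (1 : K) : K ⊗[k] K) • v.2) :=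
  rfl

end diagonal

section KstProd

variable {σ τ : K ≃ₐ[k] K}

lemma diagEnd_Kst_injective :
    Function.Injective (diagEnd k K (Kst k K σ) (Kst k K τ)) := by
  intro p q h
  have h1 := LinearMap.congr_fun h (1, 1)
  simp only [diagEnd_apply, Kst.tmul_one_smul_one, Prod.mk.injEq] at h1
  exact Prod.ext ((Kst.of σ).injective h1.1) ((Kst.of τ).injective h1.2)

lemma diagEnd_Kst_surjective (hστ : σ ≠ τ) :
    Function.Surjective (diagEnd k K (Kst k K σ) (Kst k K τ)) := by
  intro f
  obtain ⟨c, hc⟩ := (Kst.of σ).surjective (f (1, 0)).1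
  obtain ⟨d, hd⟩ := (Kst.of τ).surjective (f (0, 1)).2
  have h₁₂ : (f (1, 0)).2 = 0 := LinearMap.congr_fun
    (Kst.linearMap_eq_zero_of_ne hστ (LinearMap.snd _ _ _ ∘ₗ f ∘ₗ LinearMap.inl _ _ _)) 1
  have h₂₁ : (f (0, 1)).1 = 0 := LinearMap.congr_fun
    (Kst.linearMap_eq_zero_of_ne hστ.symm (LinearMap.fst _ _ _ ∘ₗ f ∘ₗ LinearMap.inr _ _ _)) 1
  refine ⟨(c, d), LinearMap.prod_ext (Kst.linearMap_ext ?_) (Kst.linearMap_ext ?_)⟩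
  · refine Prod.ext ?_ ?_
    · simp [diagEnd_apply, hc]
    · simp [diagEnd_apply, h₁₂]
  · refine Prod.ext ?_ ?_
    · simp [diagEnd_apply, h₂₁]
    · simp [diagEnd_apply, hd]

variable (σ τ) in
def prodEndRingEquiv (hστ : σ ≠ τ) :
    K × K ≃+* Module.End (K ⊗[k] K) (Kst k K σ × Kst k K τ) :=
  RingEquiv.ofBijective (diagEnd k K _ _) ⟨diagEnd_Kst_injective, diagEnd_Kst_surjective hστ⟩

variable (σ τ) in
def prodAutEquiv (hστ : σ ≠ τ) :
    Kˣ × Kˣ ≃* ((Kst k K σ × Kst k K τ) ≃ₗ[K ⊗[k] K] (Kst k K σ × Kst k K τ)) :=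
  MulEquiv.prodUnits.symm.trans <| (Units.mapEquiv (prodEndRingEquiv σ τ hστ).toMulEquiv).trans <|
    LinearMap.GeneralLinearGroup.generalLinearEquiv _ _

lemma prodAutEquiv_apply (hστ : σ ≠ τ) (p : Kˣ × Kˣ) (v : Kst k K σ × Kst k K τ) :
    prodAutEquiv σ τ hστ p v = diagEnd k K _ _ (p.1, p.2) v :=
  rfl

lemma map_NN_prodAutEquiv (hστ : σ ≠ τ) :
    (NN k K σ τ).map (prodAutEquiv σ τ hστ).toMonoidHom =
      innerAut k K (Kst k K σ × Kst k K τ) := by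
  ext f
  constructor
  · rintro ⟨p, ⟨a, b, h₁, h₂⟩, rfl⟩
    refine ⟨a, b, fun v => Prod.ext ?_ ?_⟩
    · simp [prodAutEquiv_apply, diagEnd_apply, h₁, Kst.tmul_smul_eq (σ := σ)]
    · simp [prodAutEquiv_apply, diagEnd_apply, h₂, Kst.tmul_smul_eq (σ := τ)]
  · rintro ⟨a, b, hf⟩
    refine ⟨(a * Units.map (σ : K →* K) b, a * Units.map (τ : K →* K) b), ⟨a, b, rfl, rfl⟩,
      LinearEquiv.ext fun v => ?_⟩
    rw [hf]
    refine Prod.ext ?_ ?_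
    · simp [prodAutEquiv_apply, diagEnd_apply, Kst.tmul_smul_eq (σ := σ)]
    · simp [prodAutEquiv_apply, diagEnd_apply, Kst.tmul_smul_eq (σ := τ)]

end KstProd

variable [PerfectField k] [FiniteDimensional k K]

theorem autV_eq_units_quot (σ τ : K ≃ₐ[k] K) (hστ : σ ≠ τ) :
    Nonempty
      ((((Kst k K σ × Kst k K τ) ≃ₗ[K ⊗[k] K] (Kst k K σ × Kst k K τ)) ⧸
          innerAut k K (Kst k K σ × Kst k K τ)) ≃*
        ((Kˣ × Kˣ) ⧸ NN k K σ τ)) :=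
  ⟨(QuotientGroup.congr _ _ (prodAutEquiv σ τ hστ) (map_NN_prodAutEquiv hστ)).symm⟩
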